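/- arXiv:2508.20003 — 2 statements merged into one kernel-verified Lean document; each statement's English description precedes it below -/
import Mathlib

section
/- Fix a positive integer M, a natural number K, complex column vectors h_1,…,h_K ∈ ℂ^M, and a real constant c > 0. Let k ∈ {1,…,K} and let T_o ⊆ T_p be subsets of {1,…,K} with k ∉ T_p. Then R_k^{T_o} ≥ R_k^{T_p}; equivalently, in determinant form, det(I_M + c(h_k h_k^H + G_{T_o})) · det(I_M + c G_{T_p}) ≥ det(I_M + c G_{T_o}) · det(I_M + c(h_k h_k^H + G_{T_p})) (all four determinants being positive reals). In words: enlarging the set of interferers can only decrease the achievable rate of user k. -/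
/-!
With `A = 1 + c G_{T_o}` and `B = 1 + c G_{T_p}` we have `A ≤ B` in the Loewner order. For
`u = h_k` the matrix determinant lemma gives `det (A + c u uᴴ) = det A · (1 + c uᴴ A⁻¹ u)`, and
likewise for `B`, so the determinant inequality reduces to `uᴴ B⁻¹ u ≤ uᴴ A⁻¹ u`, which holds
because inversion is antitone on positive definite matrices. The rate inequality is the
determinant inequality after dividing by the positive determinants of `A` and `B` and taking
`log₂`.
-/

open Matrix BigOperators

/-- `gram h T = ∑ k ∈ T, h k (h k)^H`, the Gram (interference covariance) matrix of the
channel vectors of the users in `T`. -/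
noncomputable def gram {M K : ℕ} (h : Fin K → Fin M → ℂ)
    (T : Finset (Fin K)) : Matrix (Fin M) (Fin M) ℂ :=
  ∑ k ∈ T, Matrix.vecMulVec (h k) (star (h k))

/-- Achievable (sum) rate of the user group `S` under interference from the user group `T`:
`R_S^T = log₂ (det (I + c (G_S + G_T)) / det (I + c G_T))`, both determinants being
positive reals (as determinants of `I` plus a positive semidefinite Hermitian matrix). -/
noncomputable def rate {M K : ℕ} (h : Fin K → Fin M → ℂ) (c : ℝ)
    (S T : Finset (Fin K)) : ℝ :=
  Real.logb 2
    (((1 + (c : ℂ) • (gram h S + gram h T)).det).re /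
      ((1 + (c : ℂ) • gram h T).det).re)

open scoped ComplexOrder MatrixOrder

namespace Matrix

variable {n : Type*}

theorem PosSemidef.posDef_one_add_smul [DecidableEq n] {A : Matrix n n ℂ} (hA : A.PosSemidef)
    {c : ℝ} (hc : 0 ≤ c) : (1 + (c : ℂ) • A).PosDef :=
  PosDef.one.add_posSemidef (hA.smul (Complex.zero_le_real.mpr hc))

variable [Fintype n]

theorem dotProduct_mulVec_mono {𝕜 : Type*} [RCLike 𝕜] {A B : Matrix n n 𝕜} (hAB : A ≤ B)
    (x : n → 𝕜) : star x ⬝ᵥ A *ᵥ x ≤ star x ⬝ᵥ B *ᵥ x := by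
  simpa [sub_mulVec, dotProduct_sub] using (le_iff.mp hAB).dotProduct_mulVec_nonneg x

variable [DecidableEq n]

theorem det_add_vecMulVec {R : Type*} [CommRing R] {A : Matrix n n R} (hA : IsUnit A.det)
    (u v : n → R) : (A + vecMulVec u v).det = A.det * (1 + v ⬝ᵥ A⁻¹ *ᵥ u) := by
  rw [vecMulVec_eq Unit, det_add_replicateCol_mul_replicateRow hA, Matrix.mul_assoc,
    ← replicateCol_mulVec, det_unique (1 + _), add_apply, one_apply_eq,
    replicateRow_mul_replicateCol_apply]

theorem PosDef.re_det_pos {A : Matrix n n ℂ} (hA : A.PosDef) : 0 < A.det.re :=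
  (Complex.pos_iff.mp hA.det_pos).1

theorem PosDef.im_det_eq_zero {A : Matrix n n ℂ} (hA : A.PosDef) : A.det.im = 0 :=
  (Complex.pos_iff.mp hA.det_pos).2.symm

open scoped Matrix.Norms.L2Operator in
theorem PosDef.inv_le_inv {A B : Matrix n n ℂ} (hA : A.PosDef) (hAB : A ≤ B) : B⁻¹ ≤ A⁻¹ := by
  have hB : B.PosDef := by simpa using hA.add_posSemidef hAB
  simpa using CStarAlgebra.inv_le_inv (a := hA.isUnit.unit) (b := hB.isUnit.unit)
    hA.posSemidef.nonneg hAB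

theorem PosDef.det_mul_det_add_smul_vecMulVec_le {A B : Matrix n n ℂ} (hA : A.PosDef)
    (hAB : A ≤ B) (u : n → ℂ) {c : ℂ} (hc : 0 ≤ c) :
    A.det * (B + c • vecMulVec u (star u)).det ≤ (A + c • vecMulVec u (star u)).det * B.det := by
  have hB : B.PosDef := by simpa using hA.add_posSemidef hAB
  have hquad := dotProduct_mulVec_mono (hA.inv_le_inv hAB) u
  have hdet : 0 ≤ A.det * B.det := (mul_pos hA.det_pos hB.det_pos).le
  rw [← smul_vecMulVec, det_add_vecMulVec hA.det_pos.ne'.isUnit,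
    det_add_vecMulVec hB.det_pos.ne'.isUnit]
  simp only [mulVec_smul, dotProduct_smul, smul_eq_mul]
  calc A.det * (B.det * (1 + c * (star u ⬝ᵥ B⁻¹ *ᵥ u)))
      = A.det * B.det * (1 + c * (star u ⬝ᵥ B⁻¹ *ᵥ u)) := by ring
    _ ≤ A.det * B.det * (1 + c * (star u ⬝ᵥ A⁻¹ *ᵥ u)) := by gcongr
    _ = A.det * (1 + c * (star u ⬝ᵥ A⁻¹ *ᵥ u)) * B.det := by ring

end Matrix

theorem Complex.re_mul_re_le_of_mul_le {a b c d : ℂ} (ha : a.im = 0) (hd : d.im = 0)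
    (h : a * b ≤ c * d) : a.re * b.re ≤ c.re * d.re := by
  simpa [Complex.mul_re, ha, hd] using (Complex.le_def.mp h).1

section Gram

variable {M K : ℕ} (h : Fin K → Fin M → ℂ)

theorem gram_posSemidef (T : Finset (Fin K)) : (gram h T).PosSemidef :=
  posSemidef_sum T fun k _ ↦ posSemidef_vecMulVec_self_star (h k)

theorem gram_singleton (k : Fin K) : gram h {k} = vecMulVec (h k) (star (h k)) :=
  Finset.sum_singleton _ _

theorem gram_mono {S T : Finset (Fin K)} (hST : S ⊆ T) : gram h S ≤ gram h T := by
  rw [le_iff, _root_.gram, _root_.gram, ← Finset.sum_sdiff hST, add_sub_cancel_right]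
  exact gram_posSemidef h (T \ S)

theorem one_add_smul_gram_singleton_add (c : ℂ) (k : Fin K) (T : Finset (Fin K)) :
    1 + c • (gram h {k} + gram h T) = 1 + c • gram h T + c • vecMulVec (h k) (star (h k)) := by
  rw [gram_singleton, smul_add]
  abel

end Gram

theorem stmt_0_general {M K : ℕ} (h : Fin K → Fin M → ℂ) (c : ℝ) (hc : 0 < c)
    (k : Fin K) (To Tp : Finset (Fin K)) (hsub : To ⊆ Tp) :
    rate h c {k} To ≥ rate h c {k} Tp ∧
    (0 < ((1 + (c : ℂ) • (gram h {k} + gram h To)).det).re ∧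
      0 < ((1 + (c : ℂ) • gram h Tp).det).re ∧
      0 < ((1 + (c : ℂ) • gram h To).det).re ∧
      0 < ((1 + (c : ℂ) • (gram h {k} + gram h Tp)).det).re) ∧
    ((1 + (c : ℂ) • (gram h {k} + gram h To)).det).re *
        ((1 + (c : ℂ) • gram h Tp).det).re ≥
      ((1 + (c : ℂ) • gram h To).det).re *
        ((1 + (c : ℂ) • (gram h {k} + gram h Tp)).det).re := by
  have hA := (gram_posSemidef h To).posDef_one_add_smul hc.le
  have hB := (gram_posSemidef h Tp).posDef_one_add_smul hc.le
  have hAk := ((gram_posSemidef h {k}).add (gram_posSemidef h To)).posDef_one_add_smul hc.le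
  have hBk := ((gram_posSemidef h {k}).add (gram_posSemidef h Tp)).posDef_one_add_smul hc.le
  have hAB : 1 + (c : ℂ) • gram h To ≤ 1 + (c : ℂ) • gram h Tp := by
    gcongr
    exact gram_mono h hsub
  have hdet := hA.det_mul_det_add_smul_vecMulVec_le hAB (h k) (Complex.zero_le_real.mpr hc.le)
  rw [← one_add_smul_gram_singleton_add, ← one_add_smul_gram_singleton_add] at hdet
  have hdet_re := Complex.re_mul_re_le_of_mul_le hA.im_det_eq_zero hB.im_det_eq_zero hdet
  refine ⟨?_, ⟨hAk.re_det_pos, hB.re_det_pos, hA.re_det_pos, hBk.re_det_pos⟩, hdet_re⟩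
  exact Real.logb_le_logb_of_le one_lt_two (div_pos hBk.re_det_pos hB.re_det_pos)
    ((div_le_div_iff₀ hB.re_det_pos hA.re_det_pos).2 ((mul_comm _ _).trans_le hdet_re))

/-- Lemma 4.1 (single-user version): enlarging the set of interferers can only decrease the
achievable rate of user `k`, i.e. `R_k^{T_o} ≥ R_k^{T_p}` when `T_o ⊆ T_p` and `k ∉ T_p`;
equivalently, in determinant form,
`det(I + c(h_k h_k^H + G_{T_o})) · det(I + c G_{T_p}) ≥ det(I + c G_{T_o}) · det(I + c(h_k h_k^H + G_{T_p}))`,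
all four determinants being positive reals. -/
theorem stmt_0 {M K : ℕ} (hM : 0 < M) (h : Fin K → Fin M → ℂ) (c : ℝ) (hc : 0 < c)
    (k : Fin K) (To Tp : Finset (Fin K)) (hsub : To ⊆ Tp) (hk : k ∉ Tp) :
    rate h c {k} To ≥ rate h c {k} Tp ∧
    (0 < ((1 + (c : ℂ) • (gram h {k} + gram h To)).det).re ∧
      0 < ((1 + (c : ℂ) • gram h Tp).det).re ∧
      0 < ((1 + (c : ℂ) • gram h To).det).re ∧
      0 < ((1 + (c : ℂ) • (gram h {k} + gram h Tp)).det).re) ∧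
    ((1 + (c : ℂ) • (gram h {k} + gram h To)).det).re *
        ((1 + (c : ℂ) • gram h Tp).det).re ≥
      ((1 + (c : ℂ) • gram h To).det).re *
        ((1 + (c : ℂ) • (gram h {k} + gram h Tp)).det).re :=
  stmt_0_general h c hc k To Tp hsub
end

section
/- Let M be a positive integer and let A, B₁, B₂ be Hermitian positive semidefinite complex M×M matrices such that B₂ − B₁ is positive semidefinite. Then det(I_M + A + B₁) · det(I_M + B₂) ≥ det(I_M + B₁) · det(I_M + A + B₂), where all four determinants are positive real numbers. Equivalently, the ratio B ↦ det(I_M + A + B)/det(I_M + B) is nonincreasing in B with respect to the Loewner (positive semidefinite) order. -/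
/-!
Writing `A = s * s` with `s = √A` self-adjoint, Sylvester's identity gives
`det (P + A) = det P * det (1 + s * P⁻¹ * s)` for invertible `P`. For `1 + B₁ = P ≤ Q = 1 + B₂`
operator antitonicity of the inverse gives `s * Q⁻¹ * s ≤ s * P⁻¹ * s`, and `det` is monotone on
positive definite matrices (by the same identity, since `det (1 + Z) ≥ 1` for `Z ≥ 0`), so the ratio
`det (P + A) / det P` dominates `det (Q + A) / det Q`.
-/
open Matrix ComplexOrder
open scoped MatrixOrder Matrix.Norms.L2Operator

namespace Matrix

variable {n : Type*} [Fintype n] [DecidableEq n]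

theorem det_add_mul_self {R : Type*} [CommRing R] {P : Matrix n n R} (hP : IsUnit P)
    (s : Matrix n n R) : (P + s * s).det = P.det * (1 + s * P⁻¹ * s).det := by
  have hfac : P + s * s = P * (1 + P⁻¹ * s * s) := by
    rw [mul_add, mul_one, ← mul_assoc, ← mul_assoc,
      mul_nonsing_inv _ ((isUnit_iff_isUnit_det P).1 hP), one_mul]
  rw [hfac, det_mul, det_one_add_mul_comm, mul_assoc]

theorem inv_le_inv_of_le {P Q : Matrix n n ℂ} (hP : P.PosDef) (h : P ≤ Q) : Q⁻¹ ≤ P⁻¹ := by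
  simpa only [nonsing_inv_eq_ringInverse] using
    CStarAlgebra.ringInverse_le_ringInverse h hP.isStrictlyPositive

theorem one_le_det_of_one_le {H : Matrix n n ℂ} (h : 1 ≤ H) : 1 ≤ H.det := by
  have hH : IsSelfAdjoint H := .of_nonneg (zero_le_one.trans h)
  rw [hH.isHermitian.det_eq_prod_eigenvalues]
  refine Finset.one_le_prod fun i _ => ?_
  rw [← RCLike.ofReal_one, RCLike.ofReal_le_ofReal]
  exact (CFC.one_le_iff H).1 h _ (hH.isHermitian.eigenvalues_mem_spectrum_real i)

theorem det_le_det_of_le {P Q : Matrix n n ℂ} (hP : P.PosDef) (h : P ≤ Q) : P.det ≤ Q.det := by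
  obtain ⟨s, hs, hQ⟩ : ∃ s : Matrix n n ℂ, IsSelfAdjoint s ∧ Q = P + s * s :=
    ⟨CFC.sqrt (Q - P), .of_nonneg (CFC.sqrt_nonneg _), by
      rw [CFC.sqrt_mul_sqrt_self _ (sub_nonneg.2 h), add_sub_cancel]⟩
  have h1 : 1 ≤ 1 + s * P⁻¹ * s :=
    le_add_of_nonneg_right (hs.conjugate_nonneg hP.inv.posSemidef.nonneg)
  calc P.det = P.det * 1 := (mul_one _).symm
    _ ≤ P.det * (1 + s * P⁻¹ * s).det :=
      mul_le_mul_of_nonneg_left (one_le_det_of_one_le h1) hP.det_pos.le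
    _ = Q.det := by rw [hQ, det_add_mul_self hP.isUnit]

theorem det_mul_det_add_le_det_add_mul_det {P Q A : Matrix n n ℂ} (hP : P.PosDef) (hPQ : P ≤ Q)
    (hA : 0 ≤ A) : P.det * (Q + A).det ≤ (P + A).det * Q.det := by
  obtain ⟨s, hs, rfl⟩ : ∃ s : Matrix n n ℂ, IsSelfAdjoint s ∧ A = s * s :=
    ⟨CFC.sqrt A, .of_nonneg (CFC.sqrt_nonneg A), (CFC.sqrt_mul_sqrt_self A hA).symm⟩
  have hQ : Q.PosDef := (hP.isStrictlyPositive.of_le hPQ).posDef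
  have hconj : s * Q⁻¹ * s ≤ s * P⁻¹ * s := hs.conjugate_le_conjugate (inv_le_inv_of_le hP hPQ)
  have hpos : (1 + s * Q⁻¹ * s).PosDef :=
    PosDef.one.add_posSemidef (hs.conjugate_nonneg hQ.inv.posSemidef.nonneg).posSemidef
  rw [det_add_mul_self hP.isUnit, det_add_mul_self hQ.isUnit]
  calc P.det * (Q.det * (1 + s * Q⁻¹ * s).det)
      = P.det * Q.det * (1 + s * Q⁻¹ * s).det := by ring
    _ ≤ P.det * Q.det * (1 + s * P⁻¹ * s).det :=
      mul_le_mul_of_nonneg_left (det_le_det_of_le hpos (add_le_add_right hconj 1))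
        (mul_pos hP.det_pos hQ.det_pos).le
    _ = P.det * (1 + s * P⁻¹ * s).det * Q.det := by ring

end Matrix

theorem stmt_2_general {M : ℕ} (A B₁ B₂ : Matrix (Fin M) (Fin M) ℂ)
    (hA : A.PosSemidef) (hB₁ : B₁.PosSemidef) (hB₂ : B₂.PosSemidef)
    (hBB : (B₂ - B₁).PosSemidef) :
    (0 < ((1 + A + B₁).det).re ∧ 0 < ((1 + B₂).det).re ∧
      0 < ((1 + B₁).det).re ∧ 0 < ((1 + A + B₂).det).re) ∧
    ((1 + A + B₁).det).re * ((1 + B₂).det).re ≥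
      ((1 + B₁).det).re * ((1 + A + B₂).det).re := by
  have hP : (1 + B₁).PosDef := PosDef.one.add_posSemidef hB₁
  have hQ : (1 + B₂).PosDef := PosDef.one.add_posSemidef hB₂
  have key := det_mul_det_add_le_det_add_mul_det hP (add_le_add_right (le_iff.2 hBB) 1) hA.nonneg
  have hPA := (hP.add_posSemidef hA).det_pos
  have hQA := (hQ.add_posSemidef hA).det_pos
  have hPd := hP.det_pos
  have hQd := hQ.det_pos
  rw [add_right_comm 1 A B₁, add_right_comm 1 A B₂]
  lift (1 + B₁ + A).det to ℝ using (Complex.pos_iff.1 hPA).2.symm with a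
  lift (1 + B₂ + A).det to ℝ using (Complex.pos_iff.1 hQA).2.symm with b
  lift (1 + B₁).det to ℝ using (Complex.pos_iff.1 hPd).2.symm with p
  lift (1 + B₂).det to ℝ using (Complex.pos_iff.1 hQd).2.symm with q
  simp only [Complex.ofReal_re, ge_iff_le]
  simp only [Complex.zero_lt_real] at hPA hQA hPd hQd
  exact ⟨⟨hPA, hQd, hPd, hQA⟩, mod_cast key⟩

/-- Determinant-level content of Lemma 4.1: for Hermitian positive semidefinite complex
matrices `A, B₁, B₂` with `B₂ - B₁` positive semidefinite,
`det(I + A + B₁) · det(I + B₂) ≥ det(I + B₁) · det(I + A + B₂)`, all four determinants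
being positive reals; i.e. `B ↦ det(I + A + B)/det(I + B)` is nonincreasing in the
Loewner order. -/
theorem stmt_2 {M : ℕ} (hM : 0 < M) (A B₁ B₂ : Matrix (Fin M) (Fin M) ℂ)
    (hA : A.PosSemidef) (hB₁ : B₁.PosSemidef) (hB₂ : B₂.PosSemidef)
    (hBB : (B₂ - B₁).PosSemidef) :
    (0 < ((1 + A + B₁).det).re ∧ 0 < ((1 + B₂).det).re ∧
      0 < ((1 + B₁).det).re ∧ 0 < ((1 + A + B₂).det).re) ∧
    ((1 + A + B₁).det).re * ((1 + B₂).det).re ≥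
      ((1 + B₁).det).re * ((1 + A + B₂).det).re :=
  stmt_2_general A B₁ B₂ hA hB₁ hB₂ hBB
end
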